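/- Let F : C → B and G : D → B be Galois coverings of k-categories, and let (H,J) be a morphism from F to G. Then the k-linear functor H : C → D is itself a Galois covering of D. -/

import Mathlib

open CategoryTheory

universe w v u

section CoveringDefs

variable (k : Type w) [CommRing k]

/-- A functor between `k`-linear categories is `k`-linear:
it is additive and commutes with the scalar action on morphisms. -/
def IsLinearFunctor {C : Type u} [Category.{v} C] [Preadditive C] [CategoryTheory.Linear k C]
    {B : Type u} [Category.{v} B] [Preadditive B] [CategoryTheory.Linear k B]
    (F : C ⥤ B) : Prop :=
  (∀ (x y : C) (f g : x ⟶ y), F.map (f + g) = F.map f + F.map g) ∧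
  (∀ (x y : C) (r : k) (f : x ⟶ y), F.map (r • f) = r • F.map f)

variable {C : Type u} [Category.{v} C] [Preadditive C] [CategoryTheory.Linear k C]
variable {B : Type u} [Category.{v} B] [Preadditive B] [CategoryTheory.Linear k B]

/-- The canonical map `⊕_{y ∈ F⁻¹(c)} C(x,y) →+ B(F(x),c)` induced by `F`
on the source star. -/
noncomputable def starOutHom (F : C ⥤ B) (hF : IsLinearFunctor k F) (x : C) (c : B) :
    (DirectSum {y : C // F.obj y = c} (fun y => (x ⟶ y.1))) →+ (F.obj x ⟶ c) := by
  classical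
  exact DirectSum.toAddMonoid fun y =>
    AddMonoidHom.mk' (fun f => F.map f ≫ eqToHom y.2)
      (fun f g => by (try simp only []); rw [hF.1 _ _ f g, Preadditive.add_comp]; all_goals rfl)

/-- The canonical map `⊕_{y ∈ F⁻¹(c)} C(y,x) →+ B(c,F(x))` induced by `F`
on the target star. -/
noncomputable def starInHom (F : C ⥤ B) (hF : IsLinearFunctor k F) (x : C) (c : B) :
    (DirectSum {y : C // F.obj y = c} (fun y => (y.1 ⟶ x))) →+ (c ⟶ F.obj x) := by
  classical
  exact DirectSum.toAddMonoid fun y =>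
    AddMonoidHom.mk' (fun f => eqToHom y.2.symm ≫ F.map f)
      (fun f g => by (try simp only []); rw [hF.1 _ _ f g, Preadditive.comp_add]; all_goals rfl)

/-- `F : C ⥤ B` is a covering of `k`-categories: it is a `k`-linear functor,
surjective on objects, inducing bijections on all source and target stars. -/
def IsCovering (F : C ⥤ B) : Prop :=
  ∃ hF : IsLinearFunctor k F,
    Function.Surjective F.obj ∧
    (∀ (x : C) (c : B), Function.Bijective (starOutHom k F hF x c)) ∧
    (∀ (x : C) (c : B), Function.Bijective (starInHom k F hF x c))

end CoveringDefs

/-- A `k`-category is connected if the equivalence relation generated by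
"there is a nonzero morphism from `x` to `y`" relates any two objects. -/
def IsConnectedKCat (C : Type u) [Category.{v} C] [Preadditive C] : Prop :=
  ∀ x y : C, Relation.EqvGen (fun a b : C => ∃ f : a ⟶ b, f ≠ 0) x y

section GaloisDefs

variable (k : Type w) [CommRing k]
variable {C : Type u} [Category.{v} C] [Preadditive C] [CategoryTheory.Linear k C]
variable {B : Type u} [Category.{v} B] [Preadditive B] [CategoryTheory.Linear k B]
variable {D : Type u} [Category.{v} D] [Preadditive D] [CategoryTheory.Linear k D]

/-- `H` belongs to `Aut₁ F`: it is an invertible `k`-linear endofunctor with `F ∘ H = F`. -/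
def MemAut1 (F : C ⥤ B) (H : C ⥤ C) : Prop :=
  IsLinearFunctor k H ∧
  (∃ Hinv : C ⥤ C, H ⋙ Hinv = 𝟭 C ∧ Hinv ⋙ H = 𝟭 C) ∧
  H ⋙ F = F

/-- A covering is Galois if its source is connected and `Aut₁ F` acts transitively
on some fibre. -/
def IsGaloisCovering (F : C ⥤ B) : Prop :=
  IsCovering k F ∧ IsConnectedKCat C ∧
  ∃ b₀ : B, ∀ x y : C, F.obj x = b₀ → F.obj y = b₀ →
    ∃ H : C ⥤ C, MemAut1 k F H ∧ H.obj x = y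

/-- A morphism `(H, J)` of coverings from `F : C ⥤ B` to `G : D ⥤ B`:
`H` and `J` are `k`-linear, `J` is an isomorphism which is the identity on objects,
and `G ∘ H = J ∘ F`. -/
def IsCoveringMorphism (F : C ⥤ B) (G : D ⥤ B) (H : C ⥤ D) (J : B ⥤ B) : Prop :=
  IsLinearFunctor k H ∧ IsLinearFunctor k J ∧
  (∃ Jinv : B ⥤ B, J ⋙ Jinv = 𝟭 B ∧ Jinv ⋙ J = 𝟭 B) ∧
  (∀ b : B, J.obj b = b) ∧
  H ⋙ G = F ⋙ J

end GaloisDefs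

/-- A universal covering: a Galois covering `U` such that for every Galois covering
`F : C ⥤ B` and every pair of objects `u₀`, `c₀` above the same object of `B`,
there is a unique `k`-linear functor `H` with `F ∘ H = U` and `H u₀ = c₀`. -/
def IsUniversalCovering (k : Type w) [CommRing k]
    {U' : Type u} [Category.{v} U'] [Preadditive U'] [CategoryTheory.Linear k U']
    {B : Type u} [Category.{v} B] [Preadditive B] [CategoryTheory.Linear k B]
    (U : U' ⥤ B) : Prop :=
  IsGaloisCovering k U ∧
  ∀ (C : Type u) [Category.{v} C] [Preadditive C] [CategoryTheory.Linear k C]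
    (F : C ⥤ B), IsGaloisCovering k F →
    ∀ (u₀ : U') (c₀ : C), U.obj u₀ = F.obj c₀ →
      ∃! H : U' ⥤ C, IsLinearFunctor k H ∧ H ⋙ F = U ∧ H.obj u₀ = c₀

/-- Given a functor `F : C ⥤ B`, a choice `x` of objects of `C` above each object of `B`,
and an endofunctor `H` of `C`, the subset `Z_H(c,b) = F(C(x_b, H x_c))` of `B(b,c)`. -/
def gradeSet {C : Type u} [Category.{v} C] {B : Type u} [Category.{v} B]
    (F : C ⥤ B) (x : B → C) (H : C ⥤ C) (b c : B) : Set (b ⟶ c) :=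
  {g | ∃ (h₁ : b = F.obj (x b)) (h₂ : F.obj (H.obj (x c)) = c)
        (f : x b ⟶ H.obj (x c)), g = eqToHom h₁ ≫ F.map f ≫ eqToHom h₂}

/-- The homogeneous component `Z_H(c,b)` as a `k`-submodule of `B(b,c)`. -/
noncomputable def gradeSubmodule (k : Type w) [CommRing k]
    {C : Type u} [Category.{v} C]
    {B : Type u} [Category.{v} B] [Preadditive B] [CategoryTheory.Linear k B]
    (F : C ⥤ B) (x : B → C) (H : C ⥤ C) (b c : B) : Submodule k (b ⟶ c) :=
  Submodule.span k (gradeSet F x H b c)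


/-!
Since `J` is an isomorphism fixing objects, `F ⋙ J = H ⋙ G` is again a covering, so `H` is a
functor over `B` between two coverings. The fibre of `H ⋙ G` over `G d` is the union of the
fibres of `H` over the objects of the fibre of `G` through `d`; comparing the star maps of
`H ⋙ G` and `G` therefore shows that every star map of `H` is bijective, and connectedness of `D`
makes `H` surjective on objects. For the Galois property, the star bijections propagate
transitivity of `Aut₁ F` from one fibre of `F` to its neighbours, hence to all fibres.
Given `H x = H y`, pick `σ ∈ Aut₁ F` with `σ x = y`; then `σ ⋙ H` and `H` are lifts of `F ⋙ J`
through `G` agreeing at `x`, and lifts through a covering of a connected category agreeing at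
one object are equal.
-/

open DirectSum
open scoped Classical

variable {k : Type w} [CommRing k]
variable {C : Type u} [Category.{v} C] [Preadditive C] [CategoryTheory.Linear k C]
variable {B : Type u} [Category.{v} B] [Preadditive B] [CategoryTheory.Linear k B]
variable {D : Type u} [Category.{v} D] [Preadditive D] [CategoryTheory.Linear k D]

namespace IsLinearFunctor

theorem additive {F : C ⥤ B} (hF : IsLinearFunctor k F) : F.Additive :=
  ⟨hF.1 _ _ _ _⟩

theorem comp {F : C ⥤ B} {J : B ⥤ D} (hF : IsLinearFunctor k F) (hJ : IsLinearFunctor k J) :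
    IsLinearFunctor k (F ⋙ J) :=
  ⟨fun _ _ f g => by simp only [Functor.comp_map, hF.1, hJ.1],
    fun _ _ r f => by simp only [Functor.comp_map, hF.2, hJ.2]⟩

end IsLinearFunctor

theorem starOutHom_of {F : C ⥤ B} (hF : IsLinearFunctor k F) (x : C) (c : B)
    (y : {y : C // F.obj y = c}) (f : x ⟶ y.1) :
    starOutHom k F hF x c (of (fun y : {y : C // F.obj y = c} => x ⟶ y.1) y f) =
      F.map f ≫ eqToHom y.2 := by
  simp [starOutHom]

theorem starInHom_of {F : C ⥤ B} (hF : IsLinearFunctor k F) (x : C) (c : B)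
    (y : {y : C // F.obj y = c}) (f : y.1 ⟶ x) :
    starInHom k F hF x c (of (fun y : {y : C // F.obj y = c} => y.1 ⟶ x) y f) =
      eqToHom y.2.symm ≫ F.map f := by
  simp [starInHom]

namespace DirectSum

variable {ι κ : Type*} {β : ι → Type*} [∀ i, AddCommMonoid (β i)]

noncomputable def subtypeIncl {p q : ι → Prop} (hpq : ∀ i, p i → q i) :
    (⨁ i : {i // p i}, β i) →+ ⨁ i : {i // q i}, β i :=
  toAddMonoid fun i => of (fun i : {i // q i} => β i) ⟨i, hpq i i.2⟩

noncomputable def subtypeRestrict (p q : ι → Prop) :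
    (⨁ i : {i // q i}, β i) →+ ⨁ i : {i // p i}, β i :=
  toAddMonoid fun i => if h : p i then of (fun i : {i // p i} => β i) ⟨i, h⟩ else 0

theorem subtypeIncl_of {p q : ι → Prop} (hpq : ∀ i, p i → q i) (i : {i // p i}) (b : β i) :
    subtypeIncl hpq (of (fun i : {i // p i} => β i) i b) = of _ ⟨i, hpq i i.2⟩ b :=
  toAddMonoid_of _ _ _

theorem subtypeRestrict_of_pos {p q : ι → Prop} (i : {i // q i}) (b : β i) (hi : p i) :
    subtypeRestrict p q (of (fun i : {i // q i} => β i) i b) = of _ ⟨i, hi⟩ b := by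
  simp [subtypeRestrict, hi]

theorem subtypeRestrict_of_neg {p q : ι → Prop} (i : {i // q i}) (b : β i) (hi : ¬p i) :
    subtypeRestrict p q (of (fun i : {i // q i} => β i) i b) = 0 := by
  simp [subtypeRestrict, hi]

theorem subtypeRestrict_subtypeIncl {p q : ι → Prop} (hpq : ∀ i, p i → q i)
    (a : ⨁ i : {i // p i}, β i) : subtypeRestrict p q (subtypeIncl hpq a) = a := by
  induction a using DirectSum.induction_on with
  | zero => simp
  | of i b => rw [subtypeIncl_of, subtypeRestrict_of_pos (p := p) ⟨i, hpq i i.2⟩ b i.2]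
  | add a b ha hb => simp [ha, hb]

theorem subtypeIncl_injective {p q : ι → Prop} (hpq : ∀ i, p i → q i) :
    Function.Injective (subtypeIncl (β := β) hpq) :=
  Function.LeftInverse.injective (subtypeRestrict_subtypeIncl hpq)

theorem exists_eq_of_toAddMonoid_apply_ne_zero [DecidableEq ι] [DecidableEq κ] {γ : κ → Type*}
    [∀ j, AddCommMonoid (γ j)]
    (e : ι → κ) (φ : ∀ i, β i →+ γ (e i)) {a : ⨁ i, β i} {j : κ}
    (h : toAddMonoid (fun i => (of γ (e i)).comp (φ i)) a j ≠ 0) : ∃ i, e i = j := by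
  by_contra! hne
  refine h ?_
  clear h
  induction a using DirectSum.induction_on with
  | zero => simp
  | of i b => simp [of_eq_of_ne _ _ _ (hne i).symm]
  | add a b ha hb => simp [ha, hb]

end DirectSum

theorem IsConnectedKCat.induction (hC : IsConnectedKCat C) (P : C → Prop)
    (h₁ : ∀ ⦃x y : C⦄ (f : x ⟶ y), f ≠ 0 → P x → P y)
    (h₂ : ∀ ⦃x y : C⦄ (f : x ⟶ y), f ≠ 0 → P y → P x) {x₀ : C} (h₀ : P x₀) :
    ∀ x, P x := by
  intro x
  have hP : P x₀ = P x := Setoid.eqvGen_le (s := Setoid.ker P)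
    (fun _ _ ⟨f, hf⟩ => propext ⟨h₁ f hf, h₂ f hf⟩) (hC x₀ x)
  exact hP ▸ h₀

-- Phrased as moving every point of the fibre to `x`, so that propagating it along morphisms
-- needs no inverse automorphisms.
variable (k) in
def IsFibreTransitive (F : C ⥤ B) (x : C) : Prop :=
  ∀ w, F.obj w = F.obj x → ∃ σ : C ⥤ C, MemAut1 k F σ ∧ σ.obj w = x

namespace IsCovering

variable {F : C ⥤ B}

theorem faithful (hF : IsCovering k F) : F.Faithful where
  map_injective {x y} f g hfg := by
    obtain ⟨_, -, hout, -⟩ := hF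
    refine of_injective (β := fun y' : {y' // F.obj y' = F.obj y} => x ⟶ y'.1) ⟨y, rfl⟩ ?_
    exact (hout x (F.obj y)).1 (by rw [starOutHom_of, starOutHom_of, hfg])

theorem target_eq_of_map_eq (hF : IsCovering k F) {x y y' : C} {f : x ⟶ y} (hf : f ≠ 0)
    (f' : x ⟶ y') (hy : F.obj y = F.obj y') (h : F.map f ≫ eqToHom hy = F.map f') : y = y' := by
  obtain ⟨_, -, hout, -⟩ := hF
  have hof :
      of (fun z : {z // F.obj z = F.obj y'} => x ⟶ z.1) ⟨y, hy⟩ f = of _ ⟨y', rfl⟩ f' :=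
    (hout x (F.obj y')).1 (by rw [starOutHom_of, starOutHom_of, ← h]; simp)
  by_contra hne
  have := DFunLike.congr_fun hof ⟨y, hy⟩
  rw [of_eq_same, of_eq_of_ne _ _ _ (by simpa using hne)] at this
  exact hf this

theorem source_eq_of_map_eq (hF : IsCovering k F) {x y y' : C} {f : y ⟶ x} (hf : f ≠ 0)
    (f' : y' ⟶ x) (hy : F.obj y = F.obj y') (h : eqToHom hy.symm ≫ F.map f = F.map f') :
    y = y' := by
  obtain ⟨_, -, -, hin⟩ := hF
  have hof :
      of (fun z : {z // F.obj z = F.obj y'} => z.1 ⟶ x) ⟨y, hy⟩ f = of _ ⟨y', rfl⟩ f' :=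
    (hin x (F.obj y')).1 (by rw [starInHom_of, starInHom_of, ← h]; simp)
  by_contra hne
  have := DFunLike.congr_fun hof ⟨y, hy⟩
  rw [of_eq_same, of_eq_of_ne _ _ _ (by simpa using hne)] at this
  exact hf this

theorem comp_of_obj_eq_id (hF : IsCovering k F) {J : B ⥤ B} [J.Full] [J.Faithful]
    (hJ : IsLinearFunctor k J) (hJobj : ∀ b, J.obj b = b) : IsCovering k (F ⋙ J) := by
  have hJmap (a b : B) : Function.Bijective (J.map : (a ⟶ b) → _) :=
    ⟨J.map_injective, J.map_surjective⟩
  obtain ⟨hFlin, hFsurj, hout, hin⟩ := hF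
  -- Making `J.obj` definitionally the identity identifies the fibres of `F ⋙ J` with those
  -- of `F`.
  obtain ⟨obj, map, map_id, map_comp⟩ := J
  obtain rfl : obj = id := funext hJobj
  set J : B ⥤ B := ⟨id, map, map_id, map_comp⟩
  have := hJ.additive
  refine ⟨hFlin.comp hJ, hFsurj, fun x c => ?_, fun x c => ?_⟩
  · have : starOutHom k (F ⋙ J) (hFlin.comp hJ) x c =
        J.mapAddHom.comp (starOutHom k F hFlin x c) :=
      addHom_ext fun y f => by
        rw [starOutHom_of, AddMonoidHom.comp_apply]; erw [starOutHom_of]; simp [eqToHom_map]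
    rw [this]
    exact (hJmap _ _).comp (hout x c)
  · have : starInHom k (F ⋙ J) (hFlin.comp hJ) x c =
        J.mapAddHom.comp (starInHom k F hFlin x c) :=
      addHom_ext fun y f => by
        rw [starInHom_of, AddMonoidHom.comp_apply]; erw [starInHom_of]; simp [eqToHom_map]
    rw [this]
    exact (hJmap _ _).comp (hin x c)

-- Decompose `F f` in the star of `F` at `w`; moving every summand by the automorphism that sends
-- its source to `x` decomposes `F f` in the star at `x`, where it can only be `f` itself, so one of
-- these automorphisms sends `w` to `z`.
theorem isFibreTransitive_of_source (hF : IsCovering k F) {x z : C} (f : x ⟶ z) (hf : f ≠ 0)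
    (hx : IsFibreTransitive k F x) : IsFibreTransitive k F z := by
  obtain ⟨hlin, -, hout, hin⟩ := hF
  intro w hw
  choose τ hτ hτx using fun p : {p // F.obj p = F.obj x} => hx p.1 p.2
  have hFτ (p) (q : C) : F.obj ((τ p).obj q) = F.obj q := Functor.congr_obj (hτ p).2.2 q
  let e (p : {p // F.obj p = F.obj x}) : {q // F.obj q = F.obj z} :=
    ⟨(τ p).obj w, (hFτ p w).trans hw⟩
  let φ (p : {p // F.obj p = F.obj x}) : (p.1 ⟶ w) →+ (x ⟶ (e p).1) :=
    (Preadditive.leftComp _ (eqToHom (hτx p).symm)).comp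
      (letI := (hτ p).1.additive; (τ p).mapAddHom)
  let Φ := toAddMonoid fun p =>
    (of (fun q : {q // F.obj q = F.obj z} => x ⟶ q.1) (e p)).comp (φ p)
  have hΦ : (starOutHom k F hlin x (F.obj z)).comp Φ =
      (Preadditive.rightComp _ (eqToHom hw)).comp (starInHom k F hlin w (F.obj x)) := by
    refine addHom_ext fun p g => ?_
    have hg := Functor.congr_hom (hτ p).2.2 g
    simp only [Functor.comp_map] at hg
    simp [Φ, e, φ, starOutHom_of hlin, starInHom_of hlin, Preadditive.leftComp,
      Preadditive.rightComp, hg, eqToHom_map]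
  obtain ⟨a, ha⟩ := (hin w (F.obj x)).2 (F.map f ≫ eqToHom hw.symm)
  have hΦa : Φ a = of _ ⟨z, rfl⟩ f := by
    refine (hout x (F.obj z)).1 ?_
    rw [← AddMonoidHom.comp_apply, hΦ, AddMonoidHom.comp_apply, ha, starOutHom_of]
    simp [Preadditive.rightComp]
  have hne : Φ a ⟨z, rfl⟩ ≠ 0 := by rwa [hΦa, of_eq_same]
  obtain ⟨p, hp⟩ :=
    exists_eq_of_toAddMonoid_apply_ne_zero (γ := fun q : {q // F.obj q = F.obj z} => x ⟶ q.1)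
      e φ hne
  exact ⟨τ p, hτ p, congrArg Subtype.val hp⟩

theorem isFibreTransitive_of_target (hF : IsCovering k F) {x z : C} (f : z ⟶ x) (hf : f ≠ 0)
    (hx : IsFibreTransitive k F x) : IsFibreTransitive k F z := by
  obtain ⟨hlin, -, hout, hin⟩ := hF
  intro w hw
  choose τ hτ hτx using fun p : {p // F.obj p = F.obj x} => hx p.1 p.2
  have hFτ (p) (q : C) : F.obj ((τ p).obj q) = F.obj q := Functor.congr_obj (hτ p).2.2 q
  let e (p : {p // F.obj p = F.obj x}) : {q // F.obj q = F.obj z} :=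
    ⟨(τ p).obj w, (hFτ p w).trans hw⟩
  let φ (p : {p // F.obj p = F.obj x}) : (w ⟶ p.1) →+ ((e p).1 ⟶ x) :=
    (Preadditive.rightComp _ (eqToHom (hτx p))).comp
      (letI := (hτ p).1.additive; (τ p).mapAddHom)
  let Φ := toAddMonoid fun p =>
    (of (fun q : {q // F.obj q = F.obj z} => q.1 ⟶ x) (e p)).comp (φ p)
  have hΦ : (starInHom k F hlin x (F.obj z)).comp Φ =
      (Preadditive.leftComp _ (eqToHom hw.symm)).comp (starOutHom k F hlin w (F.obj x)) := by
    refine addHom_ext fun p g => ?_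
    have hg := Functor.congr_hom (hτ p).2.2 g
    simp only [Functor.comp_map] at hg
    simp [Φ, e, φ, starOutHom_of hlin, starInHom_of hlin, Preadditive.leftComp,
      Preadditive.rightComp, hg, eqToHom_map]
  obtain ⟨a, ha⟩ := (hout w (F.obj x)).2 (eqToHom hw ≫ F.map f)
  have hΦa : Φ a = of _ ⟨z, rfl⟩ f := by
    refine (hin x (F.obj z)).1 ?_
    rw [← AddMonoidHom.comp_apply, hΦ, AddMonoidHom.comp_apply, ha, starInHom_of]
    simp [Preadditive.leftComp]
  have hne : Φ a ⟨z, rfl⟩ ≠ 0 := by rwa [hΦa, of_eq_same]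
  obtain ⟨p, hp⟩ :=
    exists_eq_of_toAddMonoid_apply_ne_zero (γ := fun q : {q // F.obj q = F.obj z} => q.1 ⟶ x)
      e φ hne
  exact ⟨τ p, hτ p, congrArg Subtype.val hp⟩

theorem eq_of_comp_eq {E : Type*} [Category E] [Preadditive E] {G : D ⥤ B} (hG : IsCovering k G)
    (hC : IsConnectedKCat E) {H H' : E ⥤ D}
    [H.Faithful] [H.PreservesZeroMorphisms] (hHH' : H ⋙ G = H' ⋙ G) {x₀ : E}
    (h₀ : H.obj x₀ = H'.obj x₀) : H = H' := by
  have := hG.faithful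
  have hmap {a b : E} (f : a ⟶ b) := Functor.congr_hom hHH' f
  simp only [Functor.comp_map] at hmap
  have hobj (x : E) : H.obj x = H'.obj x := by
    refine hC.induction (fun x => H.obj x = H'.obj x) (fun a b f hf ha => ?_)
      (fun a b f hf hb => ?_) h₀ x
    · refine hG.target_eq_of_map_eq (H.map_eq_zero_iff.not.2 hf) (eqToHom ha ≫ H'.map f)
        (Functor.congr_obj hHH' b) ?_
      simp [hmap, eqToHom_map]
    · refine hG.source_eq_of_map_eq (H.map_eq_zero_iff.not.2 hf) (H'.map f ≫ eqToHom hb.symm)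
        (Functor.congr_obj hHH' a) ?_
      simp [hmap, eqToHom_map]
  refine CategoryTheory.Functor.ext hobj fun a b f => G.map_injective ?_
  simp [hmap, eqToHom_map]

end IsCovering

theorem IsGaloisCovering.exists_memAut1_obj_eq {F : C ⥤ B} (hF : IsGaloisCovering k F) {x y : C}
    (hxy : F.obj x = F.obj y) : ∃ σ : C ⥤ C, MemAut1 k F σ ∧ σ.obj x = y := by
  obtain ⟨hcov, hC, b₀, htrans⟩ := hF
  obtain ⟨x₀, hx₀⟩ := hcov.2.1 b₀
  have h₀ : IsFibreTransitive k F x₀ := fun w hw => htrans w x₀ (hw.trans hx₀) hx₀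
  exact hC.induction (IsFibreTransitive k F) (fun _ _ f hf => hcov.isFibreTransitive_of_source f hf)
    (fun _ _ f hf => hcov.isFibreTransitive_of_target f hf) h₀ y x hxy

section Lifting

variable {H : C ⥤ D} {G : D ⥤ B} (hH : IsLinearFunctor k H)

theorem starOutHom_injective_of_comp (hG : IsLinearFunctor k G) (hHG : IsCovering k (H ⋙ G))
    (x : C) (d : D) : Function.Injective (starOutHom k H hH x d) := by
  obtain ⟨hHGlin, -, hHGout, -⟩ := hHG
  have := hG.additive
  let ι := subtypeIncl (β := fun y : C => x ⟶ y) (p := fun y => H.obj y = d)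
    (q := fun y => (H ⋙ G).obj y = G.obj d) fun _ hy => congrArg G.obj hy
  have hι : (starOutHom k (H ⋙ G) hHGlin x (G.obj d)).comp ι =
      G.mapAddHom.comp (starOutHom k H hH x d) :=
    addHom_ext fun y f => by
      rw [AddMonoidHom.comp_apply, subtypeIncl_of, starOutHom_of, AddMonoidHom.comp_apply,
        starOutHom_of, Functor.coe_mapAddHom, G.map_comp, eqToHom_map]
      rfl
  have hinj := (hHGout x (G.obj d)).1.comp (subtypeIncl_injective _ : Function.Injective ι)
  rw [← AddMonoidHom.coe_comp, hι, AddMonoidHom.coe_comp, G.coe_mapAddHom] at hinj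
  exact hinj.of_comp

theorem starOutHom_surjective_of_comp (hG : IsCovering k G) (hHG : IsCovering k (H ⋙ G))
    (x : C) (d : D) : Function.Surjective (starOutHom k H hH x d) := by
  obtain ⟨hGlin, -, hGout, -⟩ := hG
  obtain ⟨hHGlin, -, hHGout, -⟩ := hHG
  have := hH.additive
  let π := subtypeRestrict (β := fun y : C => x ⟶ y) (fun y => H.obj y = d)
    (fun y => (H ⋙ G).obj y = G.obj d)
  let ρ : (⨁ y : {y // (H ⋙ G).obj y = G.obj d}, x ⟶ y.1) →+
      ⨁ e : {e // G.obj e = G.obj d}, H.obj x ⟶ e.1 :=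
    toAddMonoid fun y =>
      (of (fun e : {e // G.obj e = G.obj d} => H.obj x ⟶ e.1) ⟨H.obj y.1, y.2⟩).comp
        H.mapAddHom
  have hρ : (starOutHom k G hGlin (H.obj x) (G.obj d)).comp ρ =
      starOutHom k (H ⋙ G) hHGlin x (G.obj d) :=
    addHom_ext fun y f => by
      rw [AddMonoidHom.comp_apply, toAddMonoid_of, AddMonoidHom.comp_apply, starOutHom_of,
        Functor.coe_mapAddHom, starOutHom_of]
      rfl
  have hπ (a) : ρ a ⟨d, rfl⟩ = starOutHom k H hH x d (π a) := by
    induction a using DirectSum.induction_on with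
    | zero => simp
    | of y f =>
      obtain ⟨y, hy⟩ := y
      simp only [ρ, π, toAddMonoid_of, AddMonoidHom.comp_apply, Functor.coe_mapAddHom]
      by_cases h : H.obj y = d
      · subst h
        rw [subtypeRestrict_of_pos (p := fun y' => H.obj y' = H.obj y) _ _ rfl, starOutHom_of,
          of_eq_same]
        simp
      · rw [subtypeRestrict_of_neg (p := fun y => H.obj y = d) _ _ h,
          of_eq_of_ne _ _ _ fun e => h (congrArg Subtype.val e).symm, map_zero]
    | add a b ha hb => simp [ha, hb]
  intro v
  obtain ⟨a, ha⟩ := (hHGout x (G.obj d)).2 (G.map v)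
  have hρa : ρ a = of _ ⟨d, rfl⟩ v := by
    refine (hGout (H.obj x) (G.obj d)).1 ?_
    rw [← AddMonoidHom.comp_apply, hρ, ha, starOutHom_of]
    simp
  exact ⟨π a, by rw [← hπ, hρa, of_eq_same]⟩

theorem starInHom_injective_of_comp (hG : IsLinearFunctor k G) (hHG : IsCovering k (H ⋙ G))
    (x : C) (d : D) : Function.Injective (starInHom k H hH x d) := by
  obtain ⟨hHGlin, -, -, hHGin⟩ := hHG
  have := hG.additive
  let ι := subtypeIncl (β := fun y : C => y ⟶ x) (p := fun y => H.obj y = d)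
    (q := fun y => (H ⋙ G).obj y = G.obj d) fun _ hy => congrArg G.obj hy
  have hι : (starInHom k (H ⋙ G) hHGlin x (G.obj d)).comp ι =
      G.mapAddHom.comp (starInHom k H hH x d) :=
    addHom_ext fun y f => by
      rw [AddMonoidHom.comp_apply, subtypeIncl_of, starInHom_of, AddMonoidHom.comp_apply,
        starInHom_of, Functor.coe_mapAddHom, G.map_comp, eqToHom_map]
      rfl
  have hinj := (hHGin x (G.obj d)).1.comp (subtypeIncl_injective _ : Function.Injective ι)
  rw [← AddMonoidHom.coe_comp, hι, AddMonoidHom.coe_comp, G.coe_mapAddHom] at hinj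
  exact hinj.of_comp

theorem starInHom_surjective_of_comp (hG : IsCovering k G) (hHG : IsCovering k (H ⋙ G))
    (x : C) (d : D) : Function.Surjective (starInHom k H hH x d) := by
  obtain ⟨hGlin, -, -, hGin⟩ := hG
  obtain ⟨hHGlin, -, -, hHGin⟩ := hHG
  have := hH.additive
  let π := subtypeRestrict (β := fun y : C => y ⟶ x) (fun y => H.obj y = d)
    (fun y => (H ⋙ G).obj y = G.obj d)
  let ρ : (⨁ y : {y // (H ⋙ G).obj y = G.obj d}, y.1 ⟶ x) →+
      ⨁ e : {e // G.obj e = G.obj d}, e.1 ⟶ H.obj x :=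
    toAddMonoid fun y =>
      (of (fun e : {e // G.obj e = G.obj d} => e.1 ⟶ H.obj x) ⟨H.obj y.1, y.2⟩).comp
        H.mapAddHom
  have hρ : (starInHom k G hGlin (H.obj x) (G.obj d)).comp ρ =
      starInHom k (H ⋙ G) hHGlin x (G.obj d) :=
    addHom_ext fun y f => by
      rw [AddMonoidHom.comp_apply, toAddMonoid_of, AddMonoidHom.comp_apply, starInHom_of,
        Functor.coe_mapAddHom, starInHom_of]
      rfl
  have hπ (a) : ρ a ⟨d, rfl⟩ = starInHom k H hH x d (π a) := by
    induction a using DirectSum.induction_on with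
    | zero => simp
    | of y f =>
      obtain ⟨y, hy⟩ := y
      simp only [ρ, π, toAddMonoid_of, AddMonoidHom.comp_apply, Functor.coe_mapAddHom]
      by_cases h : H.obj y = d
      · subst h
        rw [subtypeRestrict_of_pos (p := fun y' => H.obj y' = H.obj y) _ _ rfl, starInHom_of,
          of_eq_same]
        simp
      · rw [subtypeRestrict_of_neg (p := fun y => H.obj y = d) _ _ h,
          of_eq_of_ne _ _ _ fun e => h (congrArg Subtype.val e).symm, map_zero]
    | add a b ha hb => simp [ha, hb]
  intro v
  obtain ⟨a, ha⟩ := (hHGin x (G.obj d)).2 (G.map v)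
  have hρa : ρ a = of _ ⟨d, rfl⟩ v := by
    refine (hGin (H.obj x) (G.obj d)).1 ?_
    rw [← AddMonoidHom.comp_apply, hρ, ha, starInHom_of]
    simp
  exact ⟨π a, by rw [← hπ, hρa, of_eq_same]⟩

theorem exists_obj_eq_of_starOutHom_surjective {x : C} {d : D}
    (hout : Function.Surjective (starOutHom k H hH x d)) {v : H.obj x ⟶ d} (hv : v ≠ 0) :
    ∃ y, H.obj y = d := by
  by_contra! h
  have : IsEmpty {y // H.obj y = d} := ⟨fun y => h y.1 y.2⟩
  obtain ⟨a, rfl⟩ := hout v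
  exact hv (by rw [Subsingleton.elim a 0, map_zero])

theorem exists_obj_eq_of_starInHom_surjective {x : C} {d : D}
    (hin : Function.Surjective (starInHom k H hH x d)) {v : d ⟶ H.obj x} (hv : v ≠ 0) :
    ∃ y, H.obj y = d := by
  by_contra! h
  have : IsEmpty {y // H.obj y = d} := ⟨fun y => h y.1 y.2⟩
  obtain ⟨a, rfl⟩ := hin v
  exact hv (by rw [Subsingleton.elim a 0, map_zero])

theorem obj_surjective_of_starHom_surjective [Nonempty C] (hD : IsConnectedKCat D)
    (hout : ∀ x d, Function.Surjective (starOutHom k H hH x d))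
    (hin : ∀ x d, Function.Surjective (starInHom k H hH x d)) : Function.Surjective H.obj := by
  obtain ⟨x₀⟩ := ‹Nonempty C›
  refine hD.induction (fun d => ∃ y, H.obj y = d) ?_ ?_ ⟨x₀, rfl⟩
  · rintro _ d' f hf ⟨x, rfl⟩
    exact exists_obj_eq_of_starOutHom_surjective hH (hout x d') hf
  · rintro d _ f hf ⟨x, rfl⟩
    exact exists_obj_eq_of_starInHom_surjective hH (hin x d) hf

end Lifting

theorem IsCovering.of_comp [Nonempty C] {H : C ⥤ D} {G : D ⥤ B} (hH : IsLinearFunctor k H)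
    (hG : IsCovering k G) (hHG : IsCovering k (H ⋙ G)) (hD : IsConnectedKCat D) :
    IsCovering k H :=
  have hout := starOutHom_surjective_of_comp hH hG hHG
  have hin := starInHom_surjective_of_comp hH hG hHG
  ⟨hH, obj_surjective_of_starHom_surjective hH hD hout hin,
    fun x d => ⟨starOutHom_injective_of_comp hH hG.1 hHG x d, hout x d⟩,
    fun x d => ⟨starInHom_injective_of_comp hH hG.1 hHG x d, hin x d⟩⟩

theorem galois_morphism_is_galois_covering (k : Type w) [CommRing k]
    {C : Type u} [Category.{v} C] [Preadditive C] [CategoryTheory.Linear k C]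
    {B : Type u} [Category.{v} B] [Preadditive B] [CategoryTheory.Linear k B]
    {D : Type u} [Category.{v} D] [Preadditive D] [CategoryTheory.Linear k D]
    (F : C ⥤ B) (G : D ⥤ B) (hF : IsGaloisCovering k F) (hG : IsGaloisCovering k G)
    (H : C ⥤ D) (J : B ⥤ B) (hHJ : IsCoveringMorphism k F G H J) :
    IsGaloisCovering k H := by
  obtain ⟨hH, hJ, ⟨Jinv, hJJinv, hJinvJ⟩, hJobj, hcomm⟩ := hHJ
  have : J.IsEquivalence :=
    (CategoryTheory.Equivalence.mk J Jinv (eqToIso hJJinv.symm)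
      (eqToIso hJinvJ)).isEquivalence_functor
  have hHG : IsCovering k (H ⋙ G) := hcomm ▸ hF.1.comp_of_obj_eq_id hJ hJobj
  obtain ⟨b₀, -⟩ := hF.2.2
  obtain ⟨x₀, -⟩ := hF.1.2.1 b₀
  have : Nonempty C := ⟨x₀⟩
  have hHcov := IsCovering.of_comp hH hG.1 hHG hG.2.1
  have := hHcov.faithful
  have := hH.additive
  refine ⟨hHcov, hF.2.1, H.obj x₀, fun x y hx hy => ?_⟩
  have hGH (z : C) : G.obj (H.obj z) = F.obj z := (Functor.congr_obj hcomm z).trans (hJobj _)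
  obtain ⟨σ, hσ, rfl⟩ := hF.exists_memAut1_obj_eq (x := x) (y := y) <| by
    rw [← hGH, ← hGH, hx, hy]
  have hlift : H ⋙ G = (σ ⋙ H) ⋙ G := by rw [Functor.assoc, hcomm, ← Functor.assoc, hσ.2.2]
  have hσH : σ ⋙ H = H := (hG.1.eq_of_comp_eq hF.2.1 hlift (hx.trans hy.symm)).symm
  exact ⟨σ, ⟨hσ.1, hσ.2.1, hσH⟩, rfl⟩
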